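/- arXiv:2604.07448 — 4 statements merged into one kernel-verified Lean document; each statement's English description precedes it below -/
import Mathlib

section
/- Let V, Ṽ, S and Φ₀, Φ₁, …, Φ_d be unitary n×n complex matrices, and set W = V* S V, W̃ = Ṽ* S Ṽ and ε_prep = ‖V − Ṽ‖. Then ‖Φ_d W̃ Φ_{d−1} W̃ ⋯ Φ₁ W̃ Φ₀ − Φ_d W Φ_{d−1} W ⋯ Φ₁ W Φ₀‖ ≤ 2 d · ε_prep. -/
set_option maxHeartbeats 1000000


open scoped Matrix Matrix.Norms.L2Operator

/-- The alternating QSVT product `Φ d * W * Φ (d-1) * W * ⋯ * Φ 1 * W * Φ 0`. -/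
noncomputable def qsvtSeq {n : ℕ} (Φ : ℕ → Matrix (Fin n) (Fin n) ℂ)
    (W : Matrix (Fin n) (Fin n) ℂ) : ℕ → Matrix (Fin n) (Fin n) ℂ
  | 0 => Φ 0
  | d + 1 => Φ (d + 1) * W * qsvtSeq Φ W d

lemma one_norm_le' {n : ℕ} : ‖(1 : Matrix (Fin n) (Fin n) ℂ)‖ ≤ 1 := by
  rw [Matrix.cstar_norm_def, map_one]
  exact ContinuousLinearMap.norm_id_le

lemma unitary_norm_le' {n : ℕ} {U : Matrix (Fin n) (Fin n) ℂ}
    (hU : U ∈ Matrix.unitaryGroup (Fin n) ℂ) : ‖U‖ ≤ 1 := by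
  have h1 : Uᴴ * U = 1 := by
    simpa [Matrix.mem_unitaryGroup_iff', Matrix.star_eq_conjTranspose] using hU.1
  have h2 := Matrix.l2_opNorm_conjTranspose_mul_self U
  rw [h1] at h2
  nlinarith [norm_nonneg U, one_norm_le' (n := n)]

lemma qsvt_norm_le' {n : ℕ} (Φ : ℕ → Matrix (Fin n) (Fin n) ℂ)
    (W : Matrix (Fin n) (Fin n) ℂ) (hW : ‖W‖ ≤ 1) :
    ∀ d : ℕ, (∀ i ≤ d, ‖Φ i‖ ≤ 1) → ‖qsvtSeq Φ W d‖ ≤ 1 := by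
  intro d
  induction d with
  | zero => intro h; simpa [qsvtSeq] using h 0 le_rfl
  | succ d ih =>
    intro h
    have ihd : ‖qsvtSeq Φ W d‖ ≤ 1 := ih fun i hi => h i (hi.trans (Nat.le_succ d))
    have hΦ : ‖Φ (d + 1)‖ ≤ 1 := h (d + 1) le_rfl
    calc ‖qsvtSeq Φ W (d + 1)‖ ≤ ‖Φ (d + 1) * W‖ * ‖qsvtSeq Φ W d‖ :=
          Matrix.l2_opNorm_mul _ _
      _ ≤ (‖Φ (d + 1)‖ * ‖W‖) * ‖qsvtSeq Φ W d‖ := by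
          gcongr; exact Matrix.l2_opNorm_mul _ _
      _ ≤ 1 * 1 * 1 := by
          gcongr <;> positivity
      _ = 1 := by ring

/-- **Combined LCU + QSVT error propagation.**
If `V`, `Ṽ`, `S` and `Φ 0, …, Φ d` are unitary, `W = Vᴴ S V`, `W̃ = Ṽᴴ S Ṽ` and
`ε_prep = ‖V - Ṽ‖` in the ℓ²-induced operator norm, then the degree-`d` QSVT sequences satisfy
`‖Φ_d W̃ ⋯ Φ₁ W̃ Φ₀ - Φ_d W ⋯ Φ₁ W Φ₀‖ ≤ 2 * d * ε_prep`. -/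
theorem lcu_qsvt_error_propagation
    {n : ℕ} (d : ℕ) (V Vt S : Matrix (Fin n) (Fin n) ℂ)
    (Φ : ℕ → Matrix (Fin n) (Fin n) ℂ)
    (hV : V ∈ Matrix.unitaryGroup (Fin n) ℂ)
    (hVt : Vt ∈ Matrix.unitaryGroup (Fin n) ℂ)
    (hS : S ∈ Matrix.unitaryGroup (Fin n) ℂ)
    (hΦ : ∀ i ≤ d, Φ i ∈ Matrix.unitaryGroup (Fin n) ℂ)
    (W Wt : Matrix (Fin n) (Fin n) ℂ)
    (hW : W = Vᴴ * S * V) (hWt : Wt = Vtᴴ * S * Vt)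
    (εprep : ℝ) (hε : εprep = ‖V - Vt‖) :
    ‖qsvtSeq Φ Wt d - qsvtSeq Φ W d‖ ≤ 2 * d * εprep := by
  have hVn : ‖V‖ ≤ 1 := unitary_norm_le' hV
  have hVtn : ‖Vt‖ ≤ 1 := unitary_norm_le' hVt
  have hSn : ‖S‖ ≤ 1 := unitary_norm_le' hS
  have hVh : ‖Vᴴ‖ ≤ 1 := by rw [Matrix.l2_opNorm_conjTranspose]; exact hVn
  have hVth : ‖Vtᴴ‖ ≤ 1 := by rw [Matrix.l2_opNorm_conjTranspose]; exact hVtn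
  have hε0 : 0 ≤ εprep := hε ▸ norm_nonneg _
  -- bound ‖Wt - W‖ ≤ 2 εprep
  have hsplit : Wt - W = Vtᴴ * S * (Vt - V) + (Vtᴴ - Vᴴ) * (S * V) := by
    rw [hW, hWt]; noncomm_ring
  have hdiffh : ‖Vtᴴ - Vᴴ‖ = εprep := by
    rw [← Matrix.conjTranspose_sub, Matrix.l2_opNorm_conjTranspose, ← norm_neg, neg_sub, hε]
  have hdiff : ‖Vt - V‖ = εprep := by rw [← norm_neg, neg_sub, hε]
  have hWdiff : ‖Wt - W‖ ≤ 2 * εprep := by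
    rw [hsplit]
    calc ‖Vtᴴ * S * (Vt - V) + (Vtᴴ - Vᴴ) * (S * V)‖
        ≤ ‖Vtᴴ * S * (Vt - V)‖ + ‖(Vtᴴ - Vᴴ) * (S * V)‖ := norm_add_le _ _
      _ ≤ ‖Vtᴴ * S‖ * ‖Vt - V‖ + ‖Vtᴴ - Vᴴ‖ * ‖S * V‖ := by
          gcongr <;> exact Matrix.l2_opNorm_mul _ _
      _ ≤ (‖Vtᴴ‖ * ‖S‖) * ‖Vt - V‖ + ‖Vtᴴ - Vᴴ‖ * (‖S‖ * ‖V‖) := by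
          gcongr <;> exact Matrix.l2_opNorm_mul _ _
      _ ≤ (1 * 1) * εprep + εprep * (1 * 1) := by
          rw [hdiff, hdiffh]; gcongr <;> positivity
      _ = 2 * εprep := by ring
  have hWn : ‖W‖ ≤ 1 := by
    rw [hW]
    calc ‖Vᴴ * S * V‖ ≤ ‖Vᴴ * S‖ * ‖V‖ := Matrix.l2_opNorm_mul _ _
      _ ≤ ‖Vᴴ‖ * ‖S‖ * ‖V‖ := by gcongr; exact Matrix.l2_opNorm_mul _ _
      _ ≤ 1 * 1 * 1 := by gcongr <;> positivity
      _ = 1 := by ring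
  have hWtn : ‖Wt‖ ≤ 1 := by
    rw [hWt]
    calc ‖Vtᴴ * S * Vt‖ ≤ ‖Vtᴴ * S‖ * ‖Vt‖ := Matrix.l2_opNorm_mul _ _
      _ ≤ ‖Vtᴴ‖ * ‖S‖ * ‖Vt‖ := by gcongr; exact Matrix.l2_opNorm_mul _ _
      _ ≤ 1 * 1 * 1 := by gcongr <;> positivity
      _ = 1 := by ring
  induction d with
  | zero => simp [qsvtSeq]
  | succ d ih =>
    have hΦle : ∀ i ≤ d, Φ i ∈ Matrix.unitaryGroup (Fin n) ℂ :=
      fun i hi => hΦ i (hi.trans (Nat.le_succ d))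
    have ihd := ih hΦle
    have hA : ‖qsvtSeq Φ Wt d‖ ≤ 1 :=
      qsvt_norm_le' Φ Wt hWtn d fun i hi => unitary_norm_le' (hΦle i hi)
    have hΦn : ‖Φ (d + 1)‖ ≤ 1 := unitary_norm_le' (hΦ (d + 1) le_rfl)
    have key : qsvtSeq Φ Wt (d + 1) - qsvtSeq Φ W (d + 1)
        = Φ (d + 1) * ((Wt - W) * qsvtSeq Φ Wt d + W * (qsvtSeq Φ Wt d - qsvtSeq Φ W d)) := by
      show Φ (d + 1) * Wt * qsvtSeq Φ Wt d - Φ (d + 1) * W * qsvtSeq Φ W d = _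
      noncomm_ring
    rw [key]
    set A := qsvtSeq Φ Wt d with hAdef
    set B := qsvtSeq Φ W d with hBdef
    have h1 : ‖(Wt - W) * A‖ ≤ 2 * εprep :=
      (Matrix.l2_opNorm_mul _ _).trans
        (by nlinarith [norm_nonneg (Wt - W), norm_nonneg A])
    have h2 : ‖W * (A - B)‖ ≤ 2 * d * εprep :=
      (Matrix.l2_opNorm_mul _ _).trans
        (by nlinarith [norm_nonneg W, norm_nonneg (A - B), mul_nonneg (mul_nonneg (by norm_num : (0:ℝ) ≤ 2) (Nat.cast_nonneg d)) hε0])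
    have h3 : ‖(Wt - W) * A + W * (A - B)‖ ≤ 2 * εprep + 2 * d * εprep :=
      (norm_add_le _ _).trans (add_le_add h1 h2)
    have h4 : ‖Φ (d + 1) * ((Wt - W) * A + W * (A - B))‖
        ≤ ‖Φ (d + 1)‖ * ‖(Wt - W) * A + W * (A - B)‖ := Matrix.l2_opNorm_mul _ _
    have h5 : (0:ℝ) ≤ ‖(Wt - W) * A + W * (A - B)‖ := norm_nonneg _
    have hc : ((d + 1 : ℕ) : ℝ) = (d : ℝ) + 1 := by push_cast; ring
    rw [hc]
    have h6 : ‖Φ (d + 1)‖ * ‖(Wt - W) * A + W * (A - B)‖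
        ≤ 1 * ‖(Wt - W) * A + W * (A - B)‖ := mul_le_mul_of_nonneg_right hΦn h5
    linarith
end

section
/- Let L ∈ ℕ, let p : Fin L → ℝ satisfy 0 < pⱼ ≤ 1 for all j, let c : Fin L → ℝ, and let H₁, …, H_L be n×n complex matrices satisfying Hᵢ² = 1 (the identity matrix) for every i. Set H = Σⱼ cⱼ Hⱼ and Ĥ(ξ) = Σⱼ (cⱼ/pⱼ) ξⱼ Hⱼ with Bernoulli product probabilities Pr(ξ) = ∏ⱼ pⱼ^{ξⱼ}(1 − pⱼ)^{1−ξⱼ}. Then E[Ĥ²] − H² = ‖u‖₁ · 1, where u is the vector with components uᵢ = (1/pᵢ − 1) cᵢ² and ‖u‖₁ = Σᵢ (1/pᵢ − 1) cᵢ² (each component being nonnegative), and E[Ĥ²] = Σ_ξ Pr(ξ) · Ĥ(ξ)². -/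
/-- Probability of a sparsification outcome `ξ : Fin L → Fin 2` under independent
Bernoulli variables with parameters `p j`: `∏ⱼ pⱼ^{ξⱼ} (1 - pⱼ)^{1 - ξⱼ}`. -/
def bernoulliPr {L : ℕ} (p : Fin L → ℝ) (ξ : Fin L → Fin 2) : ℝ :=
  ∏ j, p j ^ (ξ j : ℕ) * (1 - p j) ^ (1 - (ξ j : ℕ))

lemma sum_prod_fun {L : ℕ} (h : Fin L → Fin 2 → ℝ) :
    ∑ ξ : Fin L → Fin 2, ∏ k, h k (ξ k) = ∏ k, (h k 0 + h k 1) := by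
  rw [← Fintype.prod_sum]
  simp [Fin.sum_univ_two]

lemma E_two {L : ℕ} (p : Fin L → ℝ) (i j : Fin L) :
    ∑ ξ : Fin L → Fin 2, bernoulliPr p ξ * ((ξ i : ℕ) : ℝ) * ((ξ j : ℕ) : ℝ)
      = if i = j then p i else p i * p j := by
  have key : ∀ ξ : Fin L → Fin 2, bernoulliPr p ξ * ((ξ i : ℕ) : ℝ) * ((ξ j : ℕ) : ℝ)
      = ∏ k, (p k ^ (ξ k : ℕ) * (1 - p k) ^ (1 - (ξ k : ℕ))
          * (if k = i then ((ξ k : ℕ) : ℝ) else 1) * (if k = j then ((ξ k : ℕ) : ℝ) else 1)) := by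
    intro ξ
    rw [Finset.prod_mul_distrib, Finset.prod_mul_distrib, Finset.prod_ite_eq',
      Finset.prod_ite_eq']
    simp [bernoulliPr]
  simp only [key]
  rw [sum_prod_fun (fun k x => p k ^ (x : ℕ) * (1 - p k) ^ (1 - (x : ℕ)) * (if k = i then ((x : ℕ) : ℝ) else 1) * (if k = j then ((x : ℕ) : ℝ) else 1))]
  by_cases hij : i = j
  · subst hij
    have h1 : ∀ k, (p k ^ ((0 : Fin 2) : ℕ) * (1 - p k) ^ (1 - ((0 : Fin 2) : ℕ))
          * (if k = i then (((0 : Fin 2) : ℕ) : ℝ) else 1) * (if k = i then (((0 : Fin 2) : ℕ) : ℝ) else 1))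
        + (p k ^ ((1 : Fin 2) : ℕ) * (1 - p k) ^ (1 - ((1 : Fin 2) : ℕ))
          * (if k = i then (((1 : Fin 2) : ℕ) : ℝ) else 1) * (if k = i then (((1 : Fin 2) : ℕ) : ℝ) else 1))
        = if k = i then p k else 1 := by
      intro k; by_cases h : k = i <;> simp [h]
    simp only [h1, Finset.prod_ite_eq', Finset.mem_univ, if_true]
  · have h1 : ∀ k, (p k ^ ((0 : Fin 2) : ℕ) * (1 - p k) ^ (1 - ((0 : Fin 2) : ℕ))
          * (if k = i then (((0 : Fin 2) : ℕ) : ℝ) else 1) * (if k = j then (((0 : Fin 2) : ℕ) : ℝ) else 1))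
        + (p k ^ ((1 : Fin 2) : ℕ) * (1 - p k) ^ (1 - ((1 : Fin 2) : ℕ))
          * (if k = i then (((1 : Fin 2) : ℕ) : ℝ) else 1) * (if k = j then (((1 : Fin 2) : ℕ) : ℝ) else 1))
        = (if k = i then p k else 1) * (if k = j then p k else 1) := by
      intro k
      by_cases h : k = i
      · subst h; simp [hij]
      · by_cases h' : k = j
        · subst h'; simp [h, Ne.symm hij]
        · simp [h, h']
    simp only [h1]
    rw [Finset.prod_mul_distrib, Finset.prod_ite_eq', Finset.prod_ite_eq']
    simp [hij]

/-- The SparSto stochastic estimator `Ĥ(ξ) = Σⱼ (cⱼ/pⱼ) ξⱼ Hⱼ`. -/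
noncomputable def sparstoEst {L n : ℕ} (p c : Fin L → ℝ)
    (H : Fin L → Matrix (Fin n) (Fin n) ℂ) (ξ : Fin L → Fin 2) :
    Matrix (Fin n) (Fin n) ℂ :=
  ∑ j, ((c j / p j) * ((ξ j : ℕ) : ℝ)) • H j

/-- **Coefficient-variance proxy for Pauli-like terms:**
if each `Hᵢ` squares to the identity (as Pauli strings do), then with `H = Σⱼ cⱼ Hⱼ`,
`E[Ĥ²] - H² = ‖u‖₁ · 1`, where `uᵢ = (1/pᵢ - 1) cᵢ²` and
`‖u‖₁ = Σᵢ (1/pᵢ - 1) cᵢ²` (each component being nonnegative). -/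
theorem sparsto_variance_proxy_identity
    {L n : ℕ} (p c : Fin L → ℝ)
    (hp : ∀ j, 0 < p j ∧ p j ≤ 1)
    (H : Fin L → Matrix (Fin n) (Fin n) ℂ)
    (hH : ∀ i, H i * H i = 1)
    (Ham : Matrix (Fin n) (Fin n) ℂ) (hHam : Ham = ∑ j, c j • H j) :
    (∑ ξ : Fin L → Fin 2, bernoulliPr p ξ • (sparstoEst p c H ξ * sparstoEst p c H ξ))
        - Ham * Ham
      = (∑ i, (1 / p i - 1) * (c i) ^ 2) • (1 : Matrix (Fin n) (Fin n) ℂ) := by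
  have hsq : ∀ ξ, sparstoEst p c H ξ * sparstoEst p c H ξ
      = ∑ i, ∑ j, (((c i / p i) * ((ξ i : ℕ) : ℝ)) * ((c j / p j) * ((ξ j : ℕ) : ℝ)))
          • (H i * H j) := by
    intro ξ
    rw [sparstoEst, Finset.sum_mul_sum]
    exact Finset.sum_congr rfl fun i _ => Finset.sum_congr rfl fun j _ =>
      smul_mul_smul_comm _ _ _ _
  have hmain : (∑ ξ : Fin L → Fin 2, bernoulliPr p ξ • (sparstoEst p c H ξ * sparstoEst p c H ξ))
      = ∑ i, ∑ j, (if i = j then c i ^ 2 / p i else c i * c j) • (H i * H j) := by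
    simp only [hsq, Finset.smul_sum]
    rw [Finset.sum_comm]
    refine Finset.sum_congr rfl fun i _ => ?_
    rw [Finset.sum_comm]
    refine Finset.sum_congr rfl fun j _ => ?_
    simp only [smul_smul]
    rw [← Finset.sum_smul]
    congr 1
    have : ∀ ξ : Fin L → Fin 2, bernoulliPr p ξ * (((c i / p i) * ((ξ i : ℕ) : ℝ)) *
          ((c j / p j) * ((ξ j : ℕ) : ℝ)))
        = ((c i / p i) * (c j / p j)) * (bernoulliPr p ξ * ((ξ i : ℕ) : ℝ) * ((ξ j : ℕ) : ℝ)) := by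
      intro ξ; ring
    rw [Finset.sum_congr rfl fun ξ _ => this ξ, ← Finset.mul_sum, E_two]
    have hpi := (hp i).1.ne'
    have hpj := (hp j).1.ne'
    by_cases hij : i = j
    · subst hij; simp only [if_pos rfl]; field_simp; simp only [if_true]; rw [eq_comm, ← mul_div_assoc, div_eq_iff hpi]; ring
    · simp [hij]; field_simp
  rw [hmain, hHam, Finset.sum_mul_sum]
  have hHam2 : ∀ i j : Fin L, (c i • H i) * (c j • H j) = (c i * c j) • (H i * H j) :=
    fun i j => smul_mul_smul_comm _ _ _ _
  simp only [hHam2, ← Finset.sum_sub_distrib, ← sub_smul]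
  have hterm : ∀ i : Fin L, ∑ j, ((if i = j then c i ^ 2 / p i else c i * c j) - c i * c j)
        • (H i * H j) = ((1 / p i - 1) * c i ^ 2) • (1 : Matrix (Fin n) (Fin n) ℂ) := by
    intro i
    have : ∀ j : Fin L, ((if i = j then c i ^ 2 / p i else c i * c j) - c i * c j) • (H i * H j)
        = if j = i then ((1 / p i - 1) * c i ^ 2) • (H i * H j) else 0 := by
      intro j
      by_cases h : j = i
      · subst h; simp; congr 1; ring
      · simp [h, Ne.symm h]
    rw [Finset.sum_congr rfl fun j _ => this j, Finset.sum_ite_eq', ]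
    simp [hH i]
  rw [Finset.sum_congr rfl fun i _ => hterm i, ← Finset.sum_smul]
end

section
/- Let L ∈ ℕ, let p : Fin L → ℝ satisfy 0 < pⱼ ≤ 1 for all j, let c : Fin L → ℝ, and let H₁, …, H_L be n×n complex matrices with ‖Hᵢ‖ ≤ 1 for every i. Set H = Σⱼ cⱼ Hⱼ and Ĥ(ξ) = Σⱼ (cⱼ/pⱼ) ξⱼ Hⱼ with Bernoulli product probabilities Pr(ξ) = ∏ⱼ pⱼ^{ξⱼ}(1 − pⱼ)^{1−ξⱼ}. Then ‖E[Ĥ²] − H²‖ ≤ Σᵢ cᵢ² (1/pᵢ − 1), where E[Ĥ²] = Σ_ξ Pr(ξ) · Ĥ(ξ)² and ‖·‖ is the operator norm. -/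
open scoped Matrix Matrix.Norms.L2Operator

/-- Second moment of a pair of Bernoulli indicators under the product distribution. -/
lemma bernoulli_expect {L : ℕ} (p : Fin L → ℝ) (i j : Fin L) :
    (∑ ξ : Fin L → Fin 2, bernoulliPr p ξ * ((ξ i : ℕ):ℝ) * ((ξ j : ℕ):ℝ))
      = if i = j then p i else p i * p j := by
  have h1 : ∀ ξ : Fin L → Fin 2, bernoulliPr p ξ * ((ξ i : ℕ):ℝ) * ((ξ j : ℕ):ℝ)
      = ∏ k, (p k ^ (ξ k : ℕ) * (1 - p k) ^ (1 - (ξ k : ℕ))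
          * (if k = i then ((ξ k : ℕ):ℝ) else 1) * (if k = j then ((ξ k : ℕ):ℝ) else 1)) := by
    intro ξ
    simp only [Finset.prod_mul_distrib, Finset.prod_ite_eq' Finset.univ, bernoulliPr,
      Finset.mem_univ, if_true]
  simp_rw [h1]
  rw [(Fintype.prod_sum (fun k (x : Fin 2) => (p k ^ (x : ℕ) * (1 - p k) ^ (1 - (x : ℕ))
          * (if k = i then ((x : ℕ):ℝ) else 1)
          * (if k = j then ((x : ℕ):ℝ) else 1)))).symm.trans rfl]
  have h2 : ∀ k : Fin L, (∑ x : Fin 2, (p k ^ (x : ℕ) * (1 - p k) ^ (1 - (x : ℕ))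
          * (if k = i then ((x : ℕ):ℝ) else 1) * (if k = j then ((x : ℕ):ℝ) else 1)))
      = if k = i ∨ k = j then p k else 1 := by
    intro k
    rw [Fin.sum_univ_two]
    by_cases hki : k = i <;> by_cases hkj : k = j <;> simp [hki, hkj] <;> ring
  simp_rw [h2]
  by_cases hij : i = j
  · subst hij
    simp [Finset.prod_ite_eq']
  · have h3 : ∀ k : Fin L, (if k = i ∨ k = j then p k else 1)
        = (if k = i then p k else 1) * (if k = j then p k else 1) := by
      intro k
      by_cases hki : k = i <;> by_cases hkj : k = j
      · exact absurd (hki.symm.trans hkj) hij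
      · simp [hki, hkj, hij]
      · simp [hki, hkj, Ne.symm hij]
      · simp [hki, hkj]
    simp_rw [h3]
    rw [Finset.prod_mul_distrib, Finset.prod_ite_eq' Finset.univ i,
      Finset.prod_ite_eq' Finset.univ j]
    simp [hij]

/-- **Operator-norm bound on the variance of the SparSto estimator:**
if `‖Hᵢ‖ ≤ 1` (ℓ²-induced operator norm) for all `i` and `H = Σⱼ cⱼ Hⱼ`, then
`‖E[Ĥ²] - H²‖ ≤ Σᵢ cᵢ² (1/pᵢ - 1)`. -/
theorem sparsto_variance_norm_bound
    {L n : ℕ} (p c : Fin L → ℝ)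
    (hp : ∀ j, 0 < p j ∧ p j ≤ 1)
    (H : Fin L → Matrix (Fin n) (Fin n) ℂ)
    (hH : ∀ i, ‖H i‖ ≤ 1)
    (Ham : Matrix (Fin n) (Fin n) ℂ) (hHam : Ham = ∑ j, c j • H j) :
    ‖(∑ ξ : Fin L → Fin 2, bernoulliPr p ξ • (sparstoEst p c H ξ * sparstoEst p c H ξ))
        - Ham * Ham‖
      ≤ ∑ i, (c i) ^ 2 * (1 / p i - 1) := by
  have hp0 : ∀ j, p j ≠ 0 := fun j => ne_of_gt (hp j).1
  -- expand the expectation term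
  have hE : (∑ ξ : Fin L → Fin 2, bernoulliPr p ξ • (sparstoEst p c H ξ * sparstoEst p c H ξ))
      = ∑ i, ∑ j, ((c i / p i) * (c j / p j) * (if i = j then p i else p i * p j))
          • (H i * H j) := by
    have expand : ∀ ξ : Fin L → Fin 2, sparstoEst p c H ξ * sparstoEst p c H ξ
        = ∑ i, ∑ j, (((c i / p i) * ((ξ i : ℕ):ℝ)) * ((c j / p j) * ((ξ j : ℕ):ℝ)))
            • (H i * H j) := by
      intro ξ
      rw [sparstoEst, Finset.sum_mul_sum]
      exact Finset.sum_congr rfl fun i _ => Finset.sum_congr rfl fun j _ => by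
        rw [smul_mul_assoc, mul_smul_comm, smul_smul]
    simp_rw [expand, Finset.smul_sum, smul_smul]
    rw [Finset.sum_comm]
    refine Finset.sum_congr rfl fun i _ => ?_
    rw [Finset.sum_comm]
    refine Finset.sum_congr rfl fun j _ => ?_
    rw [← Finset.sum_smul]
    congr 1
    rw [← bernoulli_expect p i j, Finset.mul_sum]
    exact Finset.sum_congr rfl fun ξ _ => by ring
  have hH2 : Ham * Ham = ∑ i, ∑ j, (c i * c j) • (H i * H j) := by
    rw [hHam, Finset.sum_mul_sum]
    exact Finset.sum_congr rfl fun i _ => Finset.sum_congr rfl fun j _ => by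
      rw [smul_mul_assoc, mul_smul_comm, smul_smul]
  have hdiff : (∑ ξ : Fin L → Fin 2,
        bernoulliPr p ξ • (sparstoEst p c H ξ * sparstoEst p c H ξ)) - Ham * Ham
      = ∑ i, ((c i) ^ 2 * (1 / p i - 1)) • (H i * H i) := by
    rw [hE, hH2, ← Finset.sum_sub_distrib]
    refine Finset.sum_congr rfl fun i _ => ?_
    rw [← Finset.sum_sub_distrib]
    have step : ∀ j : Fin L,
        ((c i / p i) * (c j / p j) * (if i = j then p i else p i * p j)) • (H i * H j)
          - (c i * c j) • (H i * H j)
        = if j = i then ((c i) ^ 2 * (1 / p i - 1)) • (H i * H i)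
          else (0 : Matrix (Fin n) (Fin n) ℂ) := by
      intro j
      rw [← sub_smul]
      by_cases hji : j = i
      · subst hji
        rw [if_pos rfl, if_pos rfl]
        congr 1
        field_simp [hp0 j]
      · rw [if_neg (fun h => hji h.symm), if_neg hji]
        have h0 : (c i / p i) * (c j / p j) * (p i * p j) - c i * c j = 0 := by
          field_simp [hp0 i, hp0 j]
          ring
        rw [h0, zero_smul]
    simp_rw [step]
    simp
  rw [hdiff]
  calc ‖∑ i, ((c i) ^ 2 * (1 / p i - 1)) • (H i * H i)‖
      ≤ ∑ i, ‖((c i) ^ 2 * (1 / p i - 1)) • (H i * H i)‖ := norm_sum_le _ _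
    _ ≤ ∑ i, (c i) ^ 2 * (1 / p i - 1) := by
        refine Finset.sum_le_sum fun i _ => ?_
        have hnn : 0 ≤ (c i) ^ 2 * (1 / p i - 1) := by
          apply mul_nonneg (sq_nonneg _)
          have : 1 ≤ 1 / p i := by
            rw [le_div_iff₀ (hp i).1]; simpa using (hp i).2
          linarith
        rw [norm_smul, Real.norm_eq_abs, abs_of_nonneg hnn]
        calc ((c i) ^ 2 * (1 / p i - 1)) * ‖H i * H i‖
            ≤ ((c i) ^ 2 * (1 / p i - 1)) * 1 := by
              apply mul_le_mul_of_nonneg_left _ hnn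
              calc ‖H i * H i‖ ≤ ‖H i‖ * ‖H i‖ := norm_mul_le _ _
                _ ≤ 1 * 1 := by
                    exact mul_le_mul (hH i) (hH i) (norm_nonneg _) zero_le_one
                _ = 1 := one_mul 1
          _ = (c i) ^ 2 * (1 / p i - 1) := mul_one _
end

section
/- Let L ∈ ℕ, let c : Fin L → ℝ satisfy cⱼ > 0 for all j, and set λ = Σⱼ cⱼ. Let H₁, …, H_L be n×n complex matrices, let V be a unitary L×L complex matrix whose first column has entries V_{j,0} = √(cⱼ/λ) for all j ∈ Fin L, and let S be the Ln×Ln block-diagonal matrix S = Σⱼ E_{jj} ⊗ Hⱼ, where E_{jj} is the L×L matrix unit and ⊗ is the Kronecker product. Then the n×n block of W = (V* ⊗ I_n) S (V ⊗ I_n) corresponding to ancilla row index 0 and ancilla column index 0 equals (1/λ) Σⱼ cⱼ Hⱼ; explicitly, W_{(0,r),(0,s)} = (1/λ) Σⱼ cⱼ (Hⱼ)_{r,s} for all r, s ∈ Fin n. -/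
open scoped Matrix Kronecker

/-- **LCU block-encoding identity.**
Let `c j > 0` with `lam = Σⱼ cⱼ`, let `V` be a unitary `L × L` matrix whose first column
has entries `V j 0 = √(cⱼ/lam)`, and let `S = Σⱼ Eⱼⱼ ⊗ Hⱼ` be the Select oracle. Then the
`(ancilla 0, ancilla 0)` block of `W = (Vᴴ ⊗ 1) S (V ⊗ 1)` equals `(1/lam) Σⱼ cⱼ Hⱼ`
entrywise. -/
theorem lcu_block_encoding
    {L n : ℕ} (hL : 0 < L) (c : Fin L → ℝ) (hc : ∀ j, 0 < c j)
    (lam : ℝ) (hlam : lam = ∑ j, c j)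
    (H : Fin L → Matrix (Fin n) (Fin n) ℂ)
    (V : Matrix (Fin L) (Fin L) ℂ)
    (hV : V ∈ Matrix.unitaryGroup (Fin L) ℂ)
    (hVcol : ∀ j, V j ⟨0, hL⟩ = (Real.sqrt (c j / lam) : ℂ))
    (S : Matrix (Fin L × Fin n) (Fin L × Fin n) ℂ)
    (hS : S = ∑ j, (Matrix.single j j (1 : ℂ)) ⊗ₖ H j)
    (W : Matrix (Fin L × Fin n) (Fin L × Fin n) ℂ)
    (hW : W = (Vᴴ ⊗ₖ (1 : Matrix (Fin n) (Fin n) ℂ)) * S * (V ⊗ₖ (1 : Matrix (Fin n) (Fin n) ℂ))) :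
    ∀ r s : Fin n, W (⟨0, hL⟩, r) (⟨0, hL⟩, s) = (1 / lam : ℝ) * ∑ j, (c j : ℂ) * H j r s := by
  intro r s
  have hlampos : 0 < lam := hlam ▸ Finset.sum_pos (fun j _ => hc j) ⟨⟨0, hL⟩, Finset.mem_univ _⟩
  subst hW hS
  simp only [Matrix.mul_apply, Matrix.sum_apply, Matrix.kroneckerMap_apply,
    Matrix.conjTranspose_apply, Matrix.one_apply, Matrix.single,
    Fintype.sum_prod_type, Matrix.of_apply]
  simp only [mul_ite, ite_mul, mul_one, mul_zero, zero_mul, one_mul, Finset.sum_ite_eq, Finset.sum_ite_eq', Finset.mem_univ, if_true]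
  simp only [ite_and, Finset.sum_ite_eq, Finset.sum_ite_eq', Finset.mem_univ, if_true,
    mul_ite, ite_mul, mul_zero, zero_mul, hVcol, Complex.star_def, Complex.conj_ofReal]
  rw [Finset.mul_sum]
  refine Finset.sum_congr rfl fun j _ => ?_
  have h1 : (Real.sqrt (c j / lam) : ℂ) * (Real.sqrt (c j / lam) : ℂ) = ((c j / lam : ℝ) : ℂ) := by
    rw [← Complex.ofReal_mul, Real.mul_self_sqrt (div_nonneg (hc j).le hlampos.le)]
  push_cast
  rw [div_eq_mul_inv]
  ring_nf
  rw [sq, ← Complex.ofReal_mul, Real.mul_self_sqrt (mul_nonneg (hc j).le (inv_nonneg.2 hlampos.le))]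
  push_cast
  ring
end
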